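/- arXiv:1706.10034 — 3 statements merged into one kernel-verified Lean document; each statement's English description precedes it below -/
import Mathlib

section
/- Let N ≥ 1, let u₀ ∈ L¹(ℝ^N) with mass M = ∫_{ℝ^N} u₀(x) dx, and let u(x,t) = ∫_{ℝ^N} G_t(x−y) u₀(y) dy be the solution of the heat equation with initial data u₀. Then ‖u(·,t) − M·G_t‖_{L¹(ℝ^N)} → 0 as t → ∞. -/
/-!
Writing `M G_t(x) = ∫ G_t(x) u₀(y) dy`, the error is `∫ (G_t(x - y) - G_t(x)) u₀(y) dy`, so by
Fubini its `L¹` norm is at most `∫ ‖τ_y G_t - G_t‖₁ |u₀(y)| dy`. By parabolic scaling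
`‖τ_y G_t - G_t‖₁ = ‖τ_{y/√t} G_1 - G_1‖₁`, which tends to `0` as `t → ∞` by continuity of
translation in `L¹`, and it is bounded by `2`; dominated convergence concludes.
-/

open MeasureTheory Real Filter

/-- The Gaussian heat kernel on `ℝ^N`: `G_t(x) = (4πt)^{-N/2} exp(-|x|²/(4t))`. -/
noncomputable def heatKernel (N : ℕ) (t : ℝ) (x : EuclideanSpace ℝ (Fin N)) : ℝ :=
  (4 * π * t) ^ (-(N : ℝ) / 2) * exp (-‖x‖ ^ 2 / (4 * t))

/-- The solution of the heat equation with initial data `u₀`, given by convolution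
with the heat kernel: `u(x,t) = ∫ G_t(x-y) u₀(y) dy`. -/
noncomputable def heatSol (N : ℕ) (u₀ : EuclideanSpace ℝ (Fin N) → ℝ)
    (x : EuclideanSpace ℝ (Fin N)) (t : ℝ) : ℝ :=
  ∫ y, heatKernel N t (x - y) * u₀ y

open Topology

section Translation

variable {G : Type*} [AddGroup G] [MeasurableSpace G] {μ : Measure G} {K u : G → ℝ}

theorem integral_abs_comp_sub_sub_le [MeasurableAdd G] [μ.IsAddRightInvariant]
    (hK : Integrable K μ) (y : G) :
    ∫ x, |K (x - y) - K x| ∂μ ≤ 2 * ∫ x, |K x| ∂μ := by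
  have hKy : Integrable (fun x => K (x - y)) μ := hK.comp_sub_right y
  calc ∫ x, |K (x - y) - K x| ∂μ ≤ ∫ x, (|K (x - y)| + |K x|) ∂μ :=
        integral_mono (hKy.sub hK).abs (hKy.abs.add hK.abs) fun x => abs_sub _ _
    _ = 2 * ∫ x, |K x| ∂μ := by
        rw [integral_add hKy.abs hK.abs, integral_sub_right_eq_self (fun x => |K x|) y]
        ring

theorem integral_abs_convolution_sub_integral_mul_le [MeasurableAdd₂ G] [MeasurableNeg G]
    [SFinite μ] [μ.IsAddRightInvariant] (hK : Integrable K μ) (hu : Integrable u μ) :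
    ∫ x, |∫ y, K (x - y) * u y ∂μ - (∫ y, u y ∂μ) * K x| ∂μ ≤
      ∫ y, (∫ x, |K (x - y) - K x| ∂μ) * |u y| ∂μ := by
  set F : G × G → ℝ := fun p => (K (p.1 - p.2) - K p.1) * u p.2
  have hconv : Integrable (fun p : G × G => K (p.1 - p.2) * u p.2) (μ.prod μ) := by
    simpa [mul_comm] using hu.convolution_integrand (ContinuousLinearMap.mul ℝ ℝ) hK
  have hF : Integrable F (μ.prod μ) := by
    refine (hconv.sub (hK.mul_prod hu)).congr (ae_of_all _ fun p => ?_)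
    simp only [F, Pi.sub_apply, sub_mul]
  have hrep : ∀ᵐ x ∂μ, ∫ y, K (x - y) * u y ∂μ - (∫ y, u y ∂μ) * K x = ∫ y, F (x, y) ∂μ := by
    filter_upwards [hconv.prod_right_ae] with x hx
    rw [mul_comm, ← integral_const_mul, ← integral_sub hx (hu.const_mul _)]
    simp only [F, sub_mul]
  calc ∫ x, |∫ y, K (x - y) * u y ∂μ - (∫ y, u y ∂μ) * K x| ∂μ
      = ∫ x, |∫ y, F (x, y) ∂μ| ∂μ :=
        integral_congr_ae (hrep.mono fun _ hx => congrArg abs hx)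
    _ ≤ ∫ x, ∫ y, |F (x, y)| ∂μ ∂μ :=
        integral_mono_of_nonneg (ae_of_all _ fun _ => abs_nonneg _) hF.abs.integral_prod_left
          (ae_of_all _ fun _ => abs_integral_le_integral_abs)
    _ = ∫ y, ∫ x, |F (x, y)| ∂μ ∂μ := integral_integral_swap hF.abs
    _ = ∫ y, (∫ x, |K (x - y) - K x| ∂μ) * |u y| ∂μ := by
        simp only [F, abs_mul, integral_mul_const]

end Translation

theorem continuous_integral_abs_comp_sub_sub {E : Type*} [NormedAddCommGroup E]
    [MeasurableSpace E] [BorelSpace E] {μ : Measure E} [μ.IsAddLeftInvariant]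
    [IsLocallyFiniteMeasure μ] [μ.InnerRegularCompactLTTop] {K : E → ℝ} (hK : Integrable K μ) :
    Continuous (fun y => ∫ x, |K (x - y) - K x| ∂μ) := by
  have : Fact ((1 : ENNReal) ≠ ⊤) := ⟨ENNReal.one_ne_top⟩
  set F : Lp ℝ 1 μ := hK.toL1 K
  have hc : Continuous (fun y : E => (DomAddAct.mk (-y) +ᵥ F) - F) :=
    (continuous_vadd.comp ((DomAddAct.continuous_mk.comp' continuous_neg).prodMk
      continuous_const)).sub continuous_const
  refine (continuous_norm.comp hc).congr fun y => ?_
  rw [Function.comp_apply, L1.norm_eq_integral_norm]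
  have hshift : (fun x => F (-y + x)) =ᵐ[μ] fun x => K (-y + x) :=
    (measurePreserving_add_left μ (-y)).quasiMeasurePreserving.ae_eq_comp hK.coeFn_toL1
  refine integral_congr_ae ?_
  filter_upwards [DomAddAct.vadd_Lp_ae_eq (DomAddAct.mk (-y)) F,
    Lp.coeFn_sub (DomAddAct.mk (-y) +ᵥ F) F, hK.coeFn_toL1, hshift] with x h1 h2 h3 h4
  rw [Real.norm_eq_abs, h2, Pi.sub_apply, h1, Equiv.symm_apply_apply, vadd_eq_add, h4, h3,
    neg_add_eq_sub]

namespace heatKernel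

variable {N : ℕ} {t : ℝ}

theorem nonneg (ht : 0 < t) (x : EuclideanSpace ℝ (Fin N)) : 0 ≤ heatKernel N t x := by
  unfold heatKernel; positivity

theorem integral_eq_one (ht : 0 < t) : ∫ x, heatKernel N t x = 1 := by
  have hexp : ∀ x : EuclideanSpace ℝ (Fin N),
      exp (-‖x‖ ^ 2 / (4 * t)) = exp (-(4 * t)⁻¹ * ‖x‖ ^ 2) := fun x => by
    rw [div_eq_inv_mul, neg_mul, mul_neg]
  simp only [heatKernel, hexp]
  rw [integral_const_mul, GaussianFourier.integral_rexp_neg_mul_sq_norm (by positivity),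
    finrank_euclideanSpace_fin, show π / (4 * t)⁻¹ = 4 * π * t by rw [div_inv_eq_mul]; ring,
    ← rpow_add (by positivity), neg_div, neg_add_cancel, rpow_zero]

theorem integrable (ht : 0 < t) : Integrable (heatKernel N t) :=
  Integrable.of_integral_ne_zero (by rw [integral_eq_one ht]; exact one_ne_zero)

theorem integral_abs_eq_one (ht : 0 < t) : ∫ x, |heatKernel N t x| = 1 := by
  simp only [abs_of_nonneg (nonneg ht _), integral_eq_one ht]

theorem eq_inv_sqrt_pow_mul_heatKernel_one (ht : 0 < t) (x : EuclideanSpace ℝ (Fin N)) :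
    heatKernel N t x = (√t ^ N)⁻¹ * heatKernel N 1 ((√t)⁻¹ • x) := by
  have hs : 0 < √t := sqrt_pos.2 ht
  have hnorm : ‖(√t)⁻¹ • x‖ ^ 2 = ‖x‖ ^ 2 / t := by
    rw [norm_smul, norm_inv, Real.norm_of_nonneg hs.le, mul_pow, inv_pow, sq_sqrt ht.le,
      inv_mul_eq_div]
  have hpow : √t ^ N = t ^ ((N : ℝ) / 2) := by
    rw [sqrt_eq_rpow, ← rpow_natCast, ← rpow_mul ht.le, one_div_mul_eq_div]
  have harg : -(‖x‖ ^ 2 / t) / (4 * 1) = -‖x‖ ^ 2 / (4 * t) := by field_simp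
  unfold heatKernel
  rw [hnorm, harg, hpow, mul_one, mul_rpow (by positivity) ht.le, neg_div, rpow_neg ht.le]
  ring

theorem integral_abs_comp_sub_sub (ht : 0 < t) (y : EuclideanSpace ℝ (Fin N)) :
    ∫ x, |heatKernel N t (x - y) - heatKernel N t x| =
      ∫ z, |heatKernel N 1 (z - (√t)⁻¹ • y) - heatKernel N 1 z| := by
  have hs : 0 < √t := sqrt_pos.2 ht
  simp only [eq_inv_sqrt_pow_mul_heatKernel_one ht, ← mul_sub, abs_mul, smul_sub,
    abs_of_pos (inv_pos.2 (pow_pos hs N))]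
  rw [integral_const_mul, Measure.integral_comp_inv_smul_of_nonneg volume
    (fun z => |heatKernel N 1 (z - (√t)⁻¹ • y) - heatKernel N 1 z|) hs.le,
    finrank_euclideanSpace_fin, smul_eq_mul, inv_mul_cancel_left₀ (pow_pos hs N).ne']

theorem tendsto_integral_abs_comp_sub_sub (y : EuclideanSpace ℝ (Fin N)) :
    Tendsto (fun t => ∫ x, |heatKernel N t (x - y) - heatKernel N t x|) atTop (𝓝 0) := by
  have hshrink : Tendsto (fun t : ℝ => (√t)⁻¹ • y) atTop (𝓝 0) := by
    simpa using (tendsto_sqrt_atTop.inv_tendsto_atTop).smul_const y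
  have hcont := (continuous_integral_abs_comp_sub_sub (integrable (N := N) one_pos)).tendsto 0
  simp only [sub_zero, sub_self, abs_zero, integral_zero] at hcont
  refine (hcont.comp hshrink).congr' ?_
  filter_upwards [eventually_gt_atTop 0] with t ht
  exact (integral_abs_comp_sub_sub ht y).symm

theorem tendsto_integral_integral_abs_comp_sub_sub_mul {u : EuclideanSpace ℝ (Fin N) → ℝ}
    (hu : Integrable u) :
    Tendsto (fun t => ∫ y, (∫ x, |heatKernel N t (x - y) - heatKernel N t x|) * |u y|)
      atTop (𝓝 0) := by
  rw [← integral_zero (EuclideanSpace ℝ (Fin N)) ℝ]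
  refine tendsto_integral_filter_of_dominated_convergence (fun y => 2 * |u y|) ?_ ?_
    (hu.abs.const_mul 2) (ae_of_all _ fun y => by
      simpa using (tendsto_integral_abs_comp_sub_sub y).mul_const |u y|)
  · filter_upwards [eventually_gt_atTop 0] with t ht
    exact (continuous_integral_abs_comp_sub_sub (integrable ht)).aestronglyMeasurable.mul
      hu.abs.aestronglyMeasurable
  · filter_upwards [eventually_gt_atTop 0] with t ht
    refine ae_of_all _ fun y => ?_
    rw [Real.norm_eq_abs, abs_mul, abs_abs, abs_of_nonneg (integral_nonneg fun _ => abs_nonneg _)]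
    gcongr
    simpa [integral_abs_eq_one ht] using integral_abs_comp_sub_sub_le (integrable ht) y

end heatKernel

theorem heat_convergence_to_gaussian_L1_general (N : ℕ)
    (u₀ : EuclideanSpace ℝ (Fin N) → ℝ) (hu₀ : Integrable u₀)
    (M : ℝ) (hM : M = ∫ x, u₀ x) :
    Tendsto (fun t : ℝ => ∫ x, |heatSol N u₀ x t - M * heatKernel N t x|)
      atTop (nhds 0) := by
  refine squeeze_zero' (Eventually.of_forall fun t => integral_nonneg fun x => abs_nonneg _) ?_
    (heatKernel.tendsto_integral_integral_abs_comp_sub_sub_mul hu₀)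
  filter_upwards [eventually_gt_atTop 0] with t ht
  rw [hM]
  exact integral_abs_convolution_sub_integral_mul_le (heatKernel.integrable ht) hu₀

/-- Convergence to the Gaussian in `L¹`:
`‖u(·,t) − M·G_t‖_{L¹(ℝ^N)} → 0` as `t → ∞`. -/
theorem heat_convergence_to_gaussian_L1 (N : ℕ) (hN : 1 ≤ N)
    (u₀ : EuclideanSpace ℝ (Fin N) → ℝ) (hu₀ : Integrable u₀)
    (M : ℝ) (hM : M = ∫ x, u₀ x) :
    Tendsto (fun t : ℝ => ∫ x, |heatSol N u₀ x t - M * heatKernel N t x|)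
      atTop (nhds 0) :=
  heat_convergence_to_gaussian_L1_general N u₀ hu₀ M hM
end

section
/- Let N ≥ 1, let u₀ ∈ L¹(ℝ^N) with mass M = ∫_{ℝ^N} u₀(x) dx, and let u(x,t) = ∫_{ℝ^N} G_t(x−y) u₀(y) dy. Then t^{N/2} ‖u(·,t) − M·G_t‖_{L^∞(ℝ^N)} → 0 as t → ∞. -/
open MeasureTheory Real Filter

/-!
Writing `M * G_t(x) = ∫ G_t(x) u₀(y) dy`, the error is `∫ (G_t(x - y) - G_t(x)) u₀(y) dy`.
In the variable `‖·‖ / (2√t)` the Gaussian profile `exp (-s²)` is bounded by `1` and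
`1`-Lipschitz, so `|G_t(x - y) - G_t(x)| ≤ (4πt)^{-N/2} min 1 (‖y‖ / (2√t))` uniformly in `x`.
The factor `(4πt)^{-N/2}` is exactly compensated by the weight `t^{N/2}`, and
`∫ min 1 (‖y‖ / (2√t)) |u₀ y| dy → 0` by dominated convergence.
-/

lemma lipschitzWith_exp_neg_sq : LipschitzWith 1 (fun s : ℝ => exp (-s ^ 2)) := by
  refine lipschitzWith_of_nnnorm_deriv_le (by fun_prop) fun s => ?_
  have hderiv : deriv (fun s : ℝ => exp (-s ^ 2)) s = exp (-s ^ 2) * -(2 * s) := by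
    simp
  have hslope : |2 * s| ≤ exp (s ^ 2) := by
    have h : |2 * s| ≤ s ^ 2 + 1 := by
      rw [abs_le]; constructor <;> nlinarith [sq_nonneg (s - 1), sq_nonneg (s + 1)]
    linarith [add_one_le_exp (s ^ 2)]
  rw [← NNReal.coe_le_coe, coe_nnnorm, hderiv, Real.norm_eq_abs, abs_mul, abs_exp, abs_neg,
    exp_neg, inv_mul_le_iff₀ (exp_pos _)]
  simpa using hslope

lemma abs_exp_neg_sq_sub_le (a b : ℝ) : |exp (-a ^ 2) - exp (-b ^ 2)| ≤ min 1 |a - b| := by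
  refine le_min ?_ ?_
  · have ha : exp (-a ^ 2) ≤ 1 := exp_le_one_iff.mpr (by nlinarith)
    have hb : exp (-b ^ 2) ≤ 1 := exp_le_one_iff.mpr (by nlinarith)
    rw [abs_sub_le_iff]
    constructor <;> linarith [exp_pos (-a ^ 2), exp_pos (-b ^ 2)]
  · simpa [Real.dist_eq] using lipschitzWith_exp_neg_sq.dist_le_mul a b

section HeatKernel

variable (N : ℕ) {t : ℝ}

lemma continuous_heatKernel (t : ℝ) : Continuous (heatKernel N t) := by
  unfold heatKernel; fun_prop

lemma heatKernel_eq_of_pos (ht : 0 < t) (z : EuclideanSpace ℝ (Fin N)) :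
    heatKernel N t z = (4 * π * t) ^ (-(N : ℝ) / 2) * exp (-(‖z‖ / (2 * √t)) ^ 2) := by
  rw [heatKernel, div_pow, mul_pow, sq_sqrt ht.le]
  ring_nf

lemma abs_heatKernel_le (ht : 0 < t) (z : EuclideanSpace ℝ (Fin N)) :
    |heatKernel N t z| ≤ (4 * π * t) ^ (-(N : ℝ) / 2) := by
  have hnorm : exp (-(‖z‖ / (2 * √t)) ^ 2) ≤ 1 := exp_le_one_iff.mpr (by nlinarith)
  rw [heatKernel_eq_of_pos N ht, abs_mul, abs_exp,
    abs_of_pos (rpow_pos_of_pos (by positivity) _)]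
  exact mul_le_of_le_one_right (by positivity) hnorm

lemma abs_heatKernel_sub_le (ht : 0 < t) (x y : EuclideanSpace ℝ (Fin N)) :
    |heatKernel N t (x - y) - heatKernel N t x| ≤
      (4 * π * t) ^ (-(N : ℝ) / 2) * min 1 (‖y‖ / (2 * √t)) := by
  have h2st : 0 < 2 * √t := by positivity
  have hdist : |‖x - y‖ / (2 * √t) - ‖x‖ / (2 * √t)| ≤ ‖y‖ / (2 * √t) := by
    rw [← sub_div, abs_div, abs_of_pos h2st]
    gcongr
    simpa using abs_norm_sub_norm_le (x - y) x
  rw [heatKernel_eq_of_pos N ht, heatKernel_eq_of_pos N ht, ← mul_sub, abs_mul,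
    abs_of_pos (rpow_pos_of_pos (by positivity) _)]
  gcongr
  exact (abs_exp_neg_sq_sub_le _ _).trans (min_le_min le_rfl hdist)

variable {N}

lemma abs_heatSol_sub_integral_mul_heatKernel_le {u₀ : EuclideanSpace ℝ (Fin N) → ℝ}
    (hu₀ : Integrable u₀) (ht : 0 < t) (x : EuclideanSpace ℝ (Fin N)) :
    |heatSol N u₀ x t - (∫ y, u₀ y) * heatKernel N t x| ≤
      (4 * π * t) ^ (-(N : ℝ) / 2) * ∫ y, min 1 (‖y‖ / (2 * √t)) * |u₀ y| := by
  have hconv : Integrable (fun y => heatKernel N t (x - y) * u₀ y) :=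
    hu₀.bdd_mul ((continuous_heatKernel N t).comp (continuous_sub_left x)).aestronglyMeasurable
      (Eventually.of_forall fun y => abs_heatKernel_le N ht (x - y))
  have herror : heatSol N u₀ x t - (∫ y, u₀ y) * heatKernel N t x =
      ∫ y, (heatKernel N t (x - y) - heatKernel N t x) * u₀ y := by
    simp_rw [sub_mul]
    rw [integral_sub hconv (hu₀.const_mul _), integral_const_mul, heatSol, mul_comm]
  have hweight : Integrable (fun y => min 1 (‖y‖ / (2 * √t)) * |u₀ y|) :=
    hu₀.abs.bdd_mul (by fun_prop) (Eventually.of_forall fun y => by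
      rw [Real.norm_eq_abs, abs_of_nonneg (le_min zero_le_one (by positivity))]
      exact min_le_left _ _)
  rw [herror, ← integral_const_mul]
  refine (abs_integral_le_integral_abs).trans (integral_mono_of_nonneg
    (Eventually.of_forall fun _ => abs_nonneg _) (hweight.const_mul _)
    (Eventually.of_forall fun y => ?_))
  dsimp only
  rw [abs_mul, ← mul_assoc]
  exact mul_le_mul_of_nonneg_right (abs_heatKernel_sub_le N ht x y) (abs_nonneg _)

end HeatKernel

lemma tendsto_integral_min_one_norm_div_mul_abs {E : Type*} [NormedAddCommGroup E]
    [MeasurableSpace E] [OpensMeasurableSpace E] {μ : Measure E} {f : E → ℝ}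
    (hf : Integrable f μ) :
    Tendsto (fun s : ℝ => ∫ y, min 1 (‖y‖ / s) * |f y| ∂μ) atTop (nhds 0) := by
  have hweight_le {s : ℝ} (hs : 0 ≤ s) (y : E) : ‖min 1 (‖y‖ / s) * |f y|‖ ≤ |f y| := by
    rw [norm_mul, Real.norm_eq_abs, Real.norm_eq_abs, abs_abs,
      abs_of_nonneg (le_min zero_le_one (by positivity))]
    exact mul_le_of_le_one_left (abs_nonneg _) (min_le_left _ _)
  have hlim (y : E) : Tendsto (fun s : ℝ => min 1 (‖y‖ / s) * |f y|) atTop (nhds 0) := by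
    have hmin : Continuous fun s : ℝ => min 1 s := continuous_const.min continuous_id
    have hdiv : Tendsto (fun s : ℝ => ‖y‖ / s) atTop (nhds 0) :=
      tendsto_const_nhds.div_atTop tendsto_id
    simpa using ((hmin.tendsto 0).comp hdiv).mul_const |f y|
  simpa using tendsto_integral_filter_of_dominated_convergence (fun y => |f y|)
    (Eventually.of_forall fun s => (by fun_prop : AEStronglyMeasurable _ μ))
    ((eventually_ge_atTop 0).mono fun s hs => Eventually.of_forall (hweight_le hs)) hf.abs
    (Eventually.of_forall hlim)

lemma rpow_mul_mul_rpow_neg {a t : ℝ} (ha : 0 ≤ a) (ht : 0 < t) (r : ℝ) :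
    t ^ r * (a * t) ^ (-r) = a ^ (-r) := by
  rw [mul_rpow ha ht.le, mul_left_comm, ← rpow_add ht, add_neg_cancel, rpow_zero, mul_one]

theorem heat_convergence_to_gaussian_Linfty_general (N : ℕ)
    (u₀ : EuclideanSpace ℝ (Fin N) → ℝ) (hu₀ : Integrable u₀)
    (M : ℝ) (hM : M = ∫ x, u₀ x) :
    Tendsto (fun t : ℝ => t ^ ((N : ℝ) / 2) *
        ⨆ x : EuclideanSpace ℝ (Fin N), |heatSol N u₀ x t - M * heatKernel N t x|)
      atTop (nhds 0) := by
  subst hM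
  set J : ℝ → ℝ := fun t => ∫ y, min 1 (‖y‖ / (2 * √t)) * |u₀ y|
  have hJ : Tendsto J atTop (nhds 0) :=
    (tendsto_integral_min_one_norm_div_mul_abs hu₀).comp
      (tendsto_sqrt_atTop.const_mul_atTop two_pos)
  have hJ_nonneg (t : ℝ) : 0 ≤ J t :=
    integral_nonneg fun y => mul_nonneg (le_min zero_le_one (by positivity)) (abs_nonneg _)
  refine squeeze_zero' (g := fun t => (4 * π) ^ (-(N : ℝ) / 2) * J t) ?_ ?_ (by
    simpa using hJ.const_mul ((4 * π) ^ (-(N : ℝ) / 2)))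
  · filter_upwards [eventually_ge_atTop 0] with t ht
    exact mul_nonneg (rpow_nonneg ht _) (Real.iSup_nonneg fun x => abs_nonneg _)
  · filter_upwards [eventually_gt_atTop 0] with t ht
    have hsup := Real.iSup_le (abs_heatSol_sub_integral_mul_heatKernel_le hu₀ ht)
      (mul_nonneg (rpow_nonneg (by positivity) _) (hJ_nonneg t))
    calc _ ≤ t ^ ((N : ℝ) / 2) * ((4 * π * t) ^ (-(N : ℝ) / 2) * J t) :=
          mul_le_mul_of_nonneg_left hsup (rpow_nonneg ht.le _)
      _ = (4 * π) ^ (-(N : ℝ) / 2) * J t := by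
          rw [← mul_assoc, neg_div, rpow_mul_mul_rpow_neg (by positivity) ht]

/-- Convergence to the Gaussian in sup norm with the natural weight:
`t^{N/2} ‖u(·,t) − M·G_t‖_{L^∞(ℝ^N)} → 0` as `t → ∞`. -/
theorem heat_convergence_to_gaussian_Linfty (N : ℕ) (hN : 1 ≤ N)
    (u₀ : EuclideanSpace ℝ (Fin N) → ℝ) (hu₀ : Integrable u₀)
    (M : ℝ) (hM : M = ∫ x, u₀ x) :
    Tendsto (fun t : ℝ => t ^ ((N : ℝ) / 2) *
        ⨆ x : EuclideanSpace ℝ (Fin N), |heatSol N u₀ x t - M * heatKernel N t x|)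
      atTop (nhds 0) :=
  heat_convergence_to_gaussian_Linfty_general N u₀ hu₀ M hM
end

section
/- Let N ≥ 1, let R > 0, x_c ∈ ℝ^N, and let u₀ ∈ L¹(ℝ^N) satisfy u₀ ≥ 0, u₀ = 0 almost everywhere outside the closed ball B_R(x_c), and M = ∫_{ℝ^N} u₀(x) dx > 0. Let u(x,t) = ∫_{ℝ^N} G_t(x−y) u₀(y) dy. Then for every fixed t > 0, log(u(x,t)/M)/|x|² → −1/(4t) as |x| → ∞. -/
open MeasureTheory Real Filter

section IntegralBounds

variable {α : Type*} [MeasurableSpace α] {μ : Measure α}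

theorem integral_mul_le_integral_mul_of_le_on {f g₁ g₂ : α → ℝ} {s : Set α}
    (hf : 0 ≤ᵐ[μ] f) (hfs : ∀ᵐ y ∂μ, y ∉ s → f y = 0)
    (h₁ : Integrable (fun y => g₁ y * f y) μ) (h₂ : Integrable (fun y => g₂ y * f y) μ)
    (hg : ∀ y ∈ s, g₁ y ≤ g₂ y) :
    ∫ y, g₁ y * f y ∂μ ≤ ∫ y, g₂ y * f y ∂μ := by
  refine integral_mono_ae h₁ h₂ ?_
  filter_upwards [hf, hfs] with y hfy hy
  by_cases hys : y ∈ s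
  · exact mul_le_mul_of_nonneg_right (hg y hys) hfy
  · simp [hy hys]

end IntegralBounds

theorem tendsto_norm_sub_add_div_norm {E : Type*} [NormedAddCommGroup E] (z : E) (s : ℝ) :
    Tendsto (fun x : E => (‖x - z‖ + s) / ‖x‖) (comap norm atTop) (nhds 1) := by
  have hnorm : Tendsto (fun x : E => ‖x‖) (comap norm atTop) atTop := tendsto_comap
  set k := ‖z‖ + |s|
  have hk : Tendsto (fun x : E => 1 + k * ‖x‖⁻¹) (comap norm atTop) (nhds (1 + k * 0)) :=
    tendsto_const_nhds.add (tendsto_const_nhds.mul (tendsto_inv_atTop_zero.comp hnorm))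
  have hk' : Tendsto (fun x : E => 1 - k * ‖x‖⁻¹) (comap norm atTop) (nhds (1 - k * 0)) :=
    tendsto_const_nhds.sub (tendsto_const_nhds.mul (tendsto_inv_atTop_zero.comp hnorm))
  simp only [mul_zero, add_zero, sub_zero] at hk hk'
  refine tendsto_of_tendsto_of_tendsto_of_le_of_le' hk' hk ?_ ?_ <;>
    filter_upwards [hnorm.eventually_gt_atTop 0] with x hx
  · rw [le_div_iff₀ hx, sub_mul, one_mul, inv_mul_cancel_right₀ hx.ne']
    linarith [norm_sub_norm_le x z, neg_abs_le s]
  · rw [div_le_iff₀ hx, add_mul, one_mul, inv_mul_cancel_right₀ hx.ne']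
    linarith [norm_sub_le x z, le_abs_self s]

theorem tendsto_sub_sq_div_sq {α : Type*} {l : Filter α} {n r : α → ℝ} (a b : ℝ)
    (hn : Tendsto n l atTop) (hr : Tendsto (fun x => r x / n x) l (nhds 1)) :
    Tendsto (fun x => (a - r x ^ 2 / b) / n x ^ 2) l (nhds (-1 / b)) := by
  have hlim : Tendsto (fun x => a * (n x)⁻¹ ^ 2 - (r x / n x) ^ 2 / b) l
      (nhds (a * 0 ^ 2 - 1 ^ 2 / b)) :=
    (tendsto_const_nhds.mul ((tendsto_inv_atTop_zero.comp hn).pow 2)).sub ((hr.pow 2).div_const b)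
  rw [show a * 0 ^ 2 - 1 ^ 2 / b = -1 / b by ring] at hlim
  refine hlim.congr' ?_
  filter_upwards [hn.eventually_gt_atTop 0] with x hx
  field_simp

noncomputable def heatProfile (N : ℕ) (t r : ℝ) : ℝ :=
  (4 * π * t) ^ (-(N : ℝ) / 2) * exp (-r ^ 2 / (4 * t))

section HeatProfile

variable {N : ℕ} {t : ℝ}

theorem heatKernel_eq_heatProfile (x : EuclideanSpace ℝ (Fin N)) :
    heatKernel N t x = heatProfile N t ‖x‖ := rfl

theorem heatProfile_pos (ht : 0 < t) (r : ℝ) : 0 < heatProfile N t r :=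
  mul_pos (rpow_pos_of_pos (by positivity) _) (exp_pos _)

theorem heatProfile_antitoneOn (ht : 0 < t) : AntitoneOn (heatProfile N t) (Set.Ici 0) := by
  intro r hr s _ hrs
  unfold heatProfile
  gcongr

theorem log_heatProfile (ht : 0 < t) (r : ℝ) :
    log (heatProfile N t r) = log ((4 * π * t) ^ (-(N : ℝ) / 2)) - r ^ 2 / (4 * t) := by
  rw [heatProfile, log_mul (rpow_pos_of_pos (by positivity) _).ne' (exp_pos _).ne', log_exp]
  ring

theorem tendsto_log_heatProfile_div_sq (ht : 0 < t) (z : EuclideanSpace ℝ (Fin N)) (s : ℝ) :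
    Tendsto (fun x : EuclideanSpace ℝ (Fin N) =>
        log (heatProfile N t (‖x - z‖ + s)) / ‖x‖ ^ 2) (comap norm atTop) (nhds (-1 / (4 * t))) := by
  simp only [log_heatProfile ht]
  exact tendsto_sub_sq_div_sq _ _ tendsto_comap (tendsto_norm_sub_add_div_norm z s)

end HeatProfile

section HeatSolBounds

variable {N : ℕ} {t : ℝ} {u₀ : EuclideanSpace ℝ (Fin N) → ℝ}

theorem integrable_heatKernel_mul (ht : 0 < t) (hu₀ : Integrable u₀)
    (x : EuclideanSpace ℝ (Fin N)) :
    Integrable (fun y => heatKernel N t (x - y) * u₀ y) := by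
  refine hu₀.bdd_mul (c := heatProfile N t 0) ?_ (Eventually.of_forall fun y => ?_)
  · exact Continuous.aestronglyMeasurable (by unfold heatKernel; fun_prop)
  · rw [heatKernel_eq_heatProfile, norm_of_nonneg (heatProfile_pos ht _).le]
    exact heatProfile_antitoneOn ht Set.self_mem_Ici (norm_nonneg _) (norm_nonneg _)

variable {R : ℝ} {xc : EuclideanSpace ℝ (Fin N)}

theorem heatProfile_mul_integral_le_heatSol (ht : 0 < t) (hu₀ : Integrable u₀)
    (hpos : 0 ≤ᵐ[volume] u₀) (hsupp : ∀ᵐ y, y ∉ Metric.closedBall xc R → u₀ y = 0)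
    (x : EuclideanSpace ℝ (Fin N)) :
    heatProfile N t (‖x - xc‖ + R) * ∫ y, u₀ y ≤ heatSol N u₀ x t := by
  rw [← integral_const_mul]
  refine integral_mul_le_integral_mul_of_le_on hpos hsupp (hu₀.const_mul _)
    (integrable_heatKernel_mul ht hu₀ x) fun y hy => ?_
  have hdist : ‖x - y‖ ≤ ‖x - xc‖ + R := by
    have := dist_triangle x xc y
    rw [dist_eq_norm x xc, dist_eq_norm x y, dist_comm] at this
    linarith [Metric.mem_closedBall.mp hy]
  exact heatProfile_antitoneOn ht (norm_nonneg _) ((norm_nonneg _).trans hdist) hdist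

theorem heatSol_le_heatProfile_mul_integral (ht : 0 < t) (hu₀ : Integrable u₀)
    (hpos : 0 ≤ᵐ[volume] u₀) (hsupp : ∀ᵐ y, y ∉ Metric.closedBall xc R → u₀ y = 0)
    {x : EuclideanSpace ℝ (Fin N)} (hx : R ≤ ‖x - xc‖) :
    heatSol N u₀ x t ≤ heatProfile N t (‖x - xc‖ - R) * ∫ y, u₀ y := by
  rw [← integral_const_mul]
  refine integral_mul_le_integral_mul_of_le_on hpos hsupp (integrable_heatKernel_mul ht hu₀ x)
    (hu₀.const_mul _) fun y hy => ?_
  refine heatProfile_antitoneOn ht (sub_nonneg.mpr hx) (norm_nonneg _) ?_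
  have := dist_triangle x y xc
  rw [dist_eq_norm x xc, dist_eq_norm x y] at this
  linarith [Metric.mem_closedBall.mp hy]

end HeatSolBounds

theorem heat_gaussian_tail_limit_general (N : ℕ) (R : ℝ)
    (xc : EuclideanSpace ℝ (Fin N)) (u₀ : EuclideanSpace ℝ (Fin N) → ℝ)
    (hu₀ : Integrable u₀) (hpos : ∀ y, 0 ≤ u₀ y)
    (hsupp : ∀ᵐ y, y ∉ Metric.closedBall xc R → u₀ y = 0)
    (M : ℝ) (hM : M = ∫ y, u₀ y) (hMpos : 0 < M)
    (t : ℝ) (ht : 0 < t) :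
    Tendsto (fun x : EuclideanSpace ℝ (Fin N) =>
        log (heatSol N u₀ x t / M) / ‖x‖ ^ 2)
      (Filter.comap (fun x : EuclideanSpace ℝ (Fin N) => ‖x‖) atTop)
      (nhds (-1 / (4 * t))) := by
  have hpos' : 0 ≤ᵐ[volume] u₀ := Eventually.of_forall hpos
  have hlower (x : EuclideanSpace ℝ (Fin N)) :
      heatProfile N t (‖x - xc‖ + R) ≤ heatSol N u₀ x t / M :=
    (le_div_iff₀ hMpos).mpr (hM ▸ heatProfile_mul_integral_le_heatSol ht hu₀ hpos' hsupp x)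
  have hfar : ∀ᶠ x : EuclideanSpace ℝ (Fin N) in comap norm atTop, R ≤ ‖x - xc‖ := by
    filter_upwards [tendsto_comap.eventually_ge_atTop (‖xc‖ + R)] with x hx
    linarith [norm_sub_norm_le x xc]
  refine tendsto_of_tendsto_of_tendsto_of_le_of_le' (tendsto_log_heatProfile_div_sq ht xc R)
    (by simpa only [← sub_eq_add_neg] using tendsto_log_heatProfile_div_sq ht xc (-R))
    (Eventually.of_forall fun x => ?_) ?_
  · exact div_le_div_of_nonneg_right (log_le_log (heatProfile_pos ht _) (hlower x)) (sq_nonneg _)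
  · filter_upwards [hfar] with x hx
    have hupper : heatSol N u₀ x t / M ≤ heatProfile N t (‖x - xc‖ - R) :=
      (div_le_iff₀ hMpos).mpr (hM ▸ heatSol_le_heatProfile_mul_integral ht hu₀ hpos' hsupp hx)
    exact div_le_div_of_nonneg_right
      (log_le_log ((heatProfile_pos ht _).trans_le (hlower x)) hupper) (sq_nonneg _)

/-- Asymptotic shape of the tail: for compactly supported nonnegative data,
`log(u(x,t)/M)/|x|² → −1/(4t)` as `|x| → ∞`, for every fixed `t > 0`. -/
theorem heat_gaussian_tail_limit (N : ℕ) (hN : 1 ≤ N) (R : ℝ) (hR : 0 < R)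
    (xc : EuclideanSpace ℝ (Fin N)) (u₀ : EuclideanSpace ℝ (Fin N) → ℝ)
    (hu₀ : Integrable u₀) (hpos : ∀ y, 0 ≤ u₀ y)
    (hsupp : ∀ᵐ y, y ∉ Metric.closedBall xc R → u₀ y = 0)
    (M : ℝ) (hM : M = ∫ y, u₀ y) (hMpos : 0 < M)
    (t : ℝ) (ht : 0 < t) :
    Tendsto (fun x : EuclideanSpace ℝ (Fin N) =>
        log (heatSol N u₀ x t / M) / ‖x‖ ^ 2)
      (Filter.comap (fun x : EuclideanSpace ℝ (Fin N) => ‖x‖) atTop)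
      (nhds (-1 / (4 * t))) :=
  heat_gaussian_tail_limit_general N R xc u₀ hu₀ hpos hsupp M hM hMpos t ht
end
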